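/- Let 𝔤 be a 3-dimensional real Lie algebra with a positive definite symmetric bilinear form B. If (J₊,J₋,X₊,X₋,H,F) is a B₃-Kähler datum on (𝔤,B), then H = 0, F = 0, and one of the following holds: (1) 𝔤 is abelian; (2) there exist a B-orthonormal basis (w₁,w₂,w₃) of 𝔤 and λ ≠ 0 such that [w₁,w₂] = λw₃, [w₂,w₃] = λw₁, [w₃,w₁] = 0, X₋ = w₂ and X₊ = ±w₂; (3) there exist a B-orthogonal basis (w₁,w₂,w₃) of 𝔤 and δ ≠ 0 with B(w₁,w₁) = 1/δ², B(w₂,w₂) = B(w₃,w₃) = 1, [w₁,w₂] = w₂, [w₁,w₃] = [w₂,w₃] = 0, X₋ = w₃ and X₊ = ±w₃. -/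

import Mathlib

/-!
Complete `X₋` to a `B`-orthonormal frame `(e₀, e₁ = J₋ e₀, X₋)`. The condition on `∇X₋` says
that `ad X₋` is `B`-skew and that the `X₋`-component of `[u, v]` is `-H(u, v, X₋)`, so
`[e₀, e₁] = a e₀ + c e₁ - h X₋`, `[e₀, X₋] = q e₁`, `[e₁, X₋] = -q e₀` with `h = H(e₀, e₁, X₋)`,
and the Jacobi identity gives `a q = c q = 0`. The conditions on `J₊` force `J₊ = ε (X₊ × ·)`
with `ε = ±1`, and `F(X₋, ·) = 0` leaves `F = f e⁰ ∧ e¹`. Evaluating the condition on `∇X₊` on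
pairs of frame vectors gives eight polynomial equations in `a, c, q, h, f, ε` and the coordinates
`(α, β, γ)` of `X₊`; they force `h = f = 0`, and `α = β = 0` unless `a = c = q = 0`. So either
`𝔤` is abelian or `X₊ = ±X₋`, and the cases `q ≠ 0` and `q = 0` give the normal forms
`[w₀, w₁] = q w₂, [w₁, w₂] = q w₀` and `[w₀, w₁] = w₁`.
-/

open LinearMap (BilinForm)
open Module

abbrev LinearMap.BilinForm.IsOrthonormal {V ι : Type*} [AddCommGroup V] [Module ℝ V]
    [DecidableEq ι] (B : BilinForm ℝ V) (v : ι → V) : Prop :=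
  ∀ i j, B (v i) (v j) = if i = j then 1 else 0

theorem exists_basis_coe_eq_of_iIsOrtho {K V ι : Type*} [Field K] [AddCommGroup V] [Module K V]
    [FiniteDimensional K V] [Fintype ι] {B : BilinForm K V} {v : ι → V} (hv : B.iIsOrtho v)
    (hv₀ : ∀ i, B (v i) (v i) ≠ 0) (hcard : Fintype.card ι = finrank K V) :
    ∃ w : Basis ι K V, ⇑w = v :=
  ⟨basisOfLinearIndependentOfCardEqFinrank' v (B.linearIndependent_of_iIsOrtho hv hv₀) hcard,
    coe_basisOfLinearIndependentOfCardEqFinrank' _ _ _⟩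

section OrthonormalBasis

variable {V : Type*} [AddCommGroup V] [Module ℝ V] {B : BilinForm ℝ V}

section Fintype

variable {ι : Type*} [Fintype ι] [DecidableEq ι] {b : Basis ι ℝ V}

theorem Module.Basis.repr_apply_of_isOrthonormal (hb : B.IsOrthonormal b) (x : V) (i : ι) :
    b.repr x i = B x (b i) := by
  have hx : B x (b i) = B (∑ j, b.repr x j • b j) (b i) := by rw [b.sum_repr]
  rw [hx, map_sum, LinearMap.sum_apply]
  simp [hb]

theorem Module.Basis.sum_apply_smul_of_isOrthonormal (hb : B.IsOrthonormal b) (x : V) :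
    ∑ i, B x (b i) • b i = x := by
  simpa [b.repr_apply_of_isOrthonormal hb] using b.sum_repr x

theorem AlternatingMap.apply_eq_mul_det_of_isOrthonormal (hb : B.IsOrthonormal b)
    (H : V [⋀^ι]→ₗ[ℝ] ℝ) (v : ι → V) :
    H v = H b * (Matrix.of fun i j => B (v j) (b i)).det := by
  conv_lhs => rw [H.eq_smul_basis_det b]
  rw [AlternatingMap.smul_apply, smul_eq_mul, Basis.det_apply]
  congr 2
  ext i j
  simp [Basis.toMatrix_apply, b.repr_apply_of_isOrthonormal hb]

end Fintype

theorem AlternatingMap.eq_zero_of_sharp_eq_zero {ι : Type*} (b : Basis ι ℝ V)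
    {F : V [⋀^Fin 2]→ₗ[ℝ] ℝ} {Fs : V → V} (hFs : ∀ x y, B (Fs x) y = F ![x, y])
    (h : ∀ i, Fs (b i) = 0) : F = 0 := by
  refine b.ext_alternating fun v _ => ?_
  have hv : (fun k => b (v k)) = ![b (v 0), b (v 1)] := by ext k; fin_cases k <;> rfl
  rw [hv, ← hFs, h]
  simp

variable {b : Basis (Fin 3) ℝ V}

theorem Module.Basis.eq_add_of_isOrthonormal_fin_three (hb : B.IsOrthonormal b) (x : V) :
    x = B x (b 0) • b 0 + B x (b 1) • b 1 + B x (b 2) • b 2 := by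
  simpa [Fin.sum_univ_three] using (b.sum_apply_smul_of_isOrthonormal hb x).symm

theorem Module.Basis.apply_self_of_isOrthonormal_fin_three (hb : B.IsOrthonormal b) (x : V) :
    B x x = B x (b 0) ^ 2 + B x (b 1) ^ 2 + B x (b 2) ^ 2 := by
  conv_lhs => rw [b.eq_add_of_isOrthonormal_fin_three hb x]
  simp [hb]
  ring

end OrthonormalBasis

section SkewEndomorphism

variable {V : Type*} [AddCommGroup V] [Module ℝ V] {B : BilinForm ℝ V} {J : V →ₗ[ℝ] V} {X : V}

theorem apply_apply_eq_of_skew_of_sq (hJ : ∀ x y, B (J x) y = -B x (J y))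
    (hJ2 : ∀ x, J (J x) = -x + B x X • X) (x y : V) :
    B (J x) (J y) = B x y - B x X * B y X := by
  rw [hJ, hJ2]
  simp only [map_add, map_neg, map_smul, smul_eq_mul]
  ring

theorem exists_unit_orthogonal_of_skew_of_sq (hdim : 1 < finrank ℝ V)
    (hBpos : ∀ x, x ≠ 0 → 0 < B x x) (hJ : ∀ x y, B (J x) y = -B x (J y)) (hJX : J X = 0)
    (hJ2 : ∀ x, J (J x) = -x + B x X • X) : ∃ e, B e e = 1 ∧ B e X = 0 := by
  obtain ⟨y, hy⟩ : ∃ y, J y ≠ 0 := by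
    by_contra! hJ0
    have htop : Submodule.span ℝ {X} = ⊤ := Submodule.eq_top_iff'.mpr fun x =>
      Submodule.mem_span_singleton.mpr
        ⟨B x X, (neg_add_eq_zero.mp ((hJ2 x).symm.trans (hJ0 _))).symm⟩
    have := finrank_span_le_card (R := ℝ) ({X} : Set V)
    rw [htop, finrank_top] at this
    simp at this
    omega
  have hpos := hBpos _ hy
  refine ⟨(√(B (J y) (J y)))⁻¹ • J y, ?_, by simp [hJ, hJX]⟩
  simp only [map_smul, LinearMap.smul_apply, smul_eq_mul]
  field_simp
  rw [Real.sq_sqrt hpos.le]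

theorem exists_isOrthonormal_basis_of_skew_of_sq (hdim : finrank ℝ V = 3)
    (hBsymm : ∀ x y, B x y = B y x) (hBpos : ∀ x, x ≠ 0 → 0 < B x x)
    (hJ : ∀ x y, B (J x) y = -B x (J y)) (hJX : J X = 0) (hJ2 : ∀ x, J (J x) = -x + B x X • X)
    (hX : B X X = 1) : ∃ b : Basis (Fin 3) ℝ V, B.IsOrthonormal b ∧ b 2 = X := by
  have : FiniteDimensional ℝ V := Module.finite_of_finrank_pos (by omega)
  obtain ⟨e, he, heX⟩ := exists_unit_orthogonal_of_skew_of_sq (by omega) hBpos hJ hJX hJ2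
  have hJe : B (J e) (J e) = 1 := by rw [apply_apply_eq_of_skew_of_sq hJ hJ2, he, heX]; ring
  have heJe : B e (J e) = 0 := by linarith [hJ e e, hBsymm e (J e)]
  have hJeX : B (J e) X = 0 := by rw [hJ, hJX, map_zero, neg_zero]
  have hv : B.IsOrthonormal ![e, J e, X] := by
    intro i j
    fin_cases i <;> fin_cases j <;> simp [he, hJe, heJe, hJeX, heX, hX, hBsymm X, hBsymm (J e)]
  obtain ⟨b, hb⟩ := exists_basis_coe_eq_of_iIsOrtho (B := B) (v := ![e, J e, X])
    (fun i j hij => by simpa [hij] using hv i j) (fun i => by simp [hv]) (by simp [hdim])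
  exact ⟨b, hb ▸ hv, by simp [hb]⟩

theorem exists_sign_of_cross_eq_zero {α β γ c₁ c₂ c₃ : ℝ} (hunit : α ^ 2 + β ^ 2 + γ ^ 2 = 1)
    (h₁ : c₂ * γ = c₃ * β) (h₂ : c₃ * α = c₁ * γ) (h₃ : c₁ * β = c₂ * α)
    (n₁ : c₂ ^ 2 + c₃ ^ 2 = 1 - α ^ 2) (n₂ : c₃ ^ 2 + c₁ ^ 2 = 1 - β ^ 2)
    (n₃ : c₁ ^ 2 + c₂ ^ 2 = 1 - γ ^ 2) :
    ∃ ε : ℝ, ε ^ 2 = 1 ∧ c₁ = ε * α ∧ c₂ = ε * β ∧ c₃ = ε * γ := by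
  set ε := c₁ * α + c₂ * β + c₃ * γ
  have e₁ : c₁ = ε * α := by linear_combination (-c₁) * hunit + β * h₃ - γ * h₂
  have e₂ : c₂ = ε * β := by linear_combination (-c₂) * hunit - α * h₃ + γ * h₁
  have e₃ : c₃ = ε * γ := by linear_combination (-c₃) * hunit + α * h₂ - β * h₁
  refine ⟨ε, ?_, e₁, e₂, e₃⟩
  linear_combination (n₁ + n₂ + n₃) / 2 - hunit / 2 - c₁ * e₁ - c₂ * e₂ - c₃ * e₃

variable {b : Basis (Fin 3) ℝ V}

theorem exists_cross_of_skew (hBsymm : ∀ x y, B x y = B y x) (hb : B.IsOrthonormal b)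
    (hJ : ∀ x y, B (J x) y = -B x (J y)) :
    ∃ c₁ c₂ c₃ : ℝ, J (b 0) = c₃ • b 1 - c₂ • b 2 ∧ J (b 1) = c₁ • b 2 - c₃ • b 0 ∧
      J (b 2) = c₂ • b 0 - c₁ • b 1 := by
  have hdiag : ∀ x, B (J x) x = 0 := fun x => by linarith [hJ x x, hBsymm x (J x)]
  have hanti : ∀ x y, B (J x) y = -B (J y) x := fun x y => by rw [hJ, hBsymm]
  refine ⟨B (J (b 1)) (b 2), B (J (b 2)) (b 0), B (J (b 0)) (b 1), ?_, ?_, ?_⟩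
  · have h := b.eq_add_of_isOrthonormal_fin_three hb (J (b 0))
    rw [hdiag, hanti (b 0) (b 2)] at h
    exact h.trans (by module)
  · have h := b.eq_add_of_isOrthonormal_fin_three hb (J (b 1))
    rw [hdiag, hanti (b 1) (b 0)] at h
    exact h.trans (by module)
  · have h := b.eq_add_of_isOrthonormal_fin_three hb (J (b 2))
    rw [hdiag, hanti (b 2) (b 1)] at h
    exact h.trans (by module)

/-- In the frame `b`, `J = ε (X × ·)`. -/
theorem exists_sign_of_skew_of_sq (hBsymm : ∀ x y, B x y = B y x) (hb : B.IsOrthonormal b)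
    (hJ : ∀ x y, B (J x) y = -B x (J y)) (hJX : J X = 0) (hJ2 : ∀ x, J (J x) = -x + B x X • X)
    (hX : B X X = 1) {α β γ : ℝ} (hXb : X = α • b 0 + β • b 1 + γ • b 2) :
    ∃ ε : ℝ, ε ^ 2 = 1 ∧ J (b 0) = ε • (γ • b 1 - β • b 2) ∧
      J (b 1) = ε • (α • b 2 - γ • b 0) ∧ J (b 2) = ε • (β • b 0 - α • b 1) := by
  obtain ⟨c₁, c₂, c₃, hJ₀, hJ₁, hJ₂⟩ := exists_cross_of_skew hBsymm hb hJ
  have hcross (i : Fin 3) : B (J X) (b i) = 0 := by simp [hJX]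
  have hnorm (i : Fin 3) : B (J (b i)) (J (b i)) = 1 - B (b i) X ^ 2 := by
    rw [apply_apply_eq_of_skew_of_sq hJ hJ2, hb]
    simp
    ring
  have h₀ := hcross 0
  have h₁ := hcross 1
  have h₂ := hcross 2
  have n₀ := hnorm 0
  have n₁ := hnorm 1
  have n₂ := hnorm 2
  subst hXb
  simp [hJ₀, hJ₁, hJ₂, hb] at hX h₀ h₁ h₂ n₀ n₁ n₂
  obtain ⟨ε, hε, rfl, rfl, rfl⟩ := exists_sign_of_cross_eq_zero (α := α) (β := β) (γ := γ)
    (c₁ := c₁) (c₂ := c₂) (c₃ := c₃)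
    (by linear_combination hX) (by linear_combination h₀) (by linear_combination h₁)
    (by linear_combination h₂) (by linear_combination n₀) (by linear_combination n₁)
    (by linear_combination n₂)
  exact ⟨ε, hε, by rw [hJ₀]; module, by rw [hJ₁]; module, by rw [hJ₂]; module⟩

end SkewEndomorphism

section Koszul

variable {𝔤 : Type*} [LieRing 𝔤] [LieAlgebra ℝ 𝔤]

/-- `koszul B x y z = 2 B (∇_x y) z` for the Levi-Civita product `∇` of `B`. -/
def koszul (B : BilinForm ℝ 𝔤) (x y z : 𝔤) : ℝ := B ⁅x, y⁆ z - B ⁅y, z⁆ x + B ⁅z, x⁆ y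

variable {B : BilinForm ℝ 𝔤} {H : 𝔤 [⋀^Fin 3]→ₗ[ℝ] ℝ} {X : 𝔤}

theorem apply_lie_antisymm_of_koszul (hX : ∀ x z, koszul B x X z = -H ![x, X, z]) (x z : 𝔤) :
    B ⁅x, X⁆ z = -B ⁅z, X⁆ x := by
  have hswap : H ![z, X, x] = -H ![x, X, z] := by
    convert H.map_swap ![x, X, z] (i := 0) (j := 2) (by decide) using 2
    ext i; fin_cases i <;> rfl
  have h₁ := hX x z
  have h₂ := hX z x
  simp only [koszul, ← lie_skew X, ← lie_skew x z, map_neg, LinearMap.neg_apply] at h₁ h₂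
  linarith

theorem apply_lie_eq_of_koszul (hX : ∀ x z, koszul B x X z = -H ![x, X, z]) (u v : 𝔤) :
    B ⁅u, v⁆ X = -H ![u, v, X] := by
  have hcycle : H ![v, X, u] = H ![u, v, X] := by
    convert H.map_perm ![u, v, X] (finRotate 3) using 1
    · congr 1; ext i; fin_cases i <;> rfl
    · simp [sign_finRotate]
  have h := hX v u
  simp only [koszul, apply_lie_antisymm_of_koszul hX v u, ← lie_skew X u, map_neg,
    LinearMap.neg_apply] at h
  linarith

end Koszul

section Frame

variable {𝔤 : Type*} [LieRing 𝔤] [LieAlgebra ℝ 𝔤] {B : BilinForm ℝ 𝔤} {b : Basis (Fin 3) ℝ 𝔤}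

theorem exists_lie_table_of_koszul (hb : B.IsOrthonormal b) {H : 𝔤 [⋀^Fin 3]→ₗ[ℝ] ℝ}
    (hX : ∀ x z, koszul B x (b 2) z = -H ![x, b 2, z]) :
    ∃ a c q : ℝ, ⁅b 0, b 1⁆ = a • b 0 + c • b 1 - H b • b 2 ∧ ⁅b 0, b 2⁆ = q • b 1 ∧
      ⁅b 1, b 2⁆ = -(q • b 0) := by
  have hdiag : ∀ x, B ⁅x, b 2⁆ x = 0 := fun x => by
    linarith [apply_lie_antisymm_of_koszul hX x x]
  have hX0 : ∀ x, B ⁅x, b 2⁆ (b 2) = 0 := fun x => by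
    rw [apply_lie_antisymm_of_koszul hX, lie_self, map_zero, LinearMap.zero_apply, neg_zero]
  have hHb : H ![b 0, b 1, b 2] = H b := by congr 1; ext i; fin_cases i <;> rfl
  refine ⟨B ⁅b 0, b 1⁆ (b 0), B ⁅b 0, b 1⁆ (b 1), B ⁅b 0, b 2⁆ (b 1), ?_, ?_, ?_⟩
  · have h := b.eq_add_of_isOrthonormal_fin_three hb ⁅b 0, b 1⁆
    rw [apply_lie_eq_of_koszul hX, hHb] at h
    exact h.trans (by module)
  · have h := b.eq_add_of_isOrthonormal_fin_three hb ⁅b 0, b 2⁆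
    rw [hdiag, hX0] at h
    exact h.trans (by module)
  · have h := b.eq_add_of_isOrthonormal_fin_three hb ⁅b 1, b 2⁆
    rw [hdiag, hX0, apply_lie_antisymm_of_koszul hX (b 1) (b 0)] at h
    exact h.trans (by module)

theorem mul_eq_zero_of_lie_table (hb : B.IsOrthonormal b) {a c h q : ℝ}
    (h₀₁ : ⁅b 0, b 1⁆ = a • b 0 + c • b 1 - h • b 2) (h₀₂ : ⁅b 0, b 2⁆ = q • b 1)
    (h₁₂ : ⁅b 1, b 2⁆ = -(q • b 0)) : a * q = 0 ∧ c * q = 0 := by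
  have h₂₀ : ⁅b 2, b 0⁆ = -(q • b 1) := by rw [← lie_skew, h₀₂]
  have h₂₁ : ⁅b 2, b 1⁆ = q • b 0 := by rw [← lie_skew, h₁₂, neg_neg]
  have hjac := leibniz_lie (b 2) (b 0) (b 1)
  simp only [h₀₁, h₂₀, h₂₁, lie_add, lie_sub, lie_smul, neg_lie, smul_lie, lie_self] at hjac
  have h0 := congrArg (B · (b 0)) hjac
  have h1 := congrArg (B · (b 1)) hjac
  simp [hb] at h0 h1
  exact ⟨mul_eq_zero.mpr h1, mul_eq_zero.mpr h0⟩

theorem sharp_eq_of_iota_eq_zero (hb : B.IsOrthonormal b) {F : 𝔤 [⋀^Fin 2]→ₗ[ℝ] ℝ}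
    {Fs : 𝔤 → 𝔤} (hFs : ∀ x y, B (Fs x) y = F ![x, y]) (hF : ∀ y, F ![b 2, y] = 0) :
    Fs (b 0) = F ![b 0, b 1] • b 1 ∧ Fs (b 1) = -(F ![b 0, b 1] • b 0) ∧ Fs (b 2) = 0 := by
  have hswap : ∀ x y, F ![y, x] = -F ![x, y] := fun x y => by
    convert F.map_swap ![x, y] (i := 0) (j := 1) (by decide) using 2
    ext i; fin_cases i <;> rfl
  have hrep : ∀ x, F ![x, x] = 0 := fun x =>
    F.map_eq_zero_of_eq _ (i := 0) (j := 1) rfl (by decide)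
  refine ⟨?_, ?_, ?_⟩
  · have h := b.eq_add_of_isOrthonormal_fin_three hb (Fs (b 0))
    rw [hFs, hFs, hFs, hrep, hswap (b 2) (b 0), hF] at h
    exact h.trans (by module)
  · have h := b.eq_add_of_isOrthonormal_fin_three hb (Fs (b 1))
    rw [hFs, hFs, hFs, hrep, hswap (b 2) (b 1), hF, hswap (b 0) (b 1)] at h
    exact h.trans (by module)
  · have h := b.eq_add_of_isOrthonormal_fin_three hb (Fs (b 2))
    rw [hFs, hFs, hFs, hF, hF, hF] at h
    exact h.trans (by module)

theorem koszul_relations (hb : B.IsOrthonormal b) {a c q h f ε α β γ : ℝ}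
    (h₀₁ : ⁅b 0, b 1⁆ = a • b 0 + c • b 1 - h • b 2) (h₀₂ : ⁅b 0, b 2⁆ = q • b 1)
    (h₁₂ : ⁅b 1, b 2⁆ = -(q • b 0)) {H : 𝔤 [⋀^Fin 3]→ₗ[ℝ] ℝ} (hH : H b = h)
    {J : 𝔤 →ₗ[ℝ] 𝔤} (hJ₀ : J (b 0) = ε • (γ • b 1 - β • b 2))
    (hJ₁ : J (b 1) = ε • (α • b 2 - γ • b 0))
    {Fs : 𝔤 → 𝔤} (hF₀ : Fs (b 0) = f • b 1) (hF₁ : Fs (b 1) = -(f • b 0)) (hF₂ : Fs (b 2) = 0)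
    {X : 𝔤} (hXb : X = α • b 0 + β • b 1 + γ • b 2)
    (hX : ∀ x z, koszul B x X z = -H ![X, x, z] - 2 * B (J (Fs x)) z) :
    a * β = ε * f * γ ∧ a * α = h * γ ∧ c * β = h * γ ∧ c * α = -(ε * f * γ) ∧
      ε * f * α = h * β ∧ ε * f * β = -(h * α) ∧ q * β = 0 ∧ q * α = 0 := by
  have hX' : ∀ x z, koszul B x X z =
      -(h * (Matrix.of fun i j => B (![X, x, z] j) (b i)).det) - 2 * B (J (Fs x)) z :=
    fun x z => by rw [hX, AlternatingMap.apply_eq_mul_det_of_isOrthonormal hb H, hH]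
  have h₁₀ : ⁅b 1, b 0⁆ = -(a • b 0 + c • b 1 - h • b 2) := by rw [← lie_skew, h₀₁]
  have h₂₀ : ⁅b 2, b 0⁆ = -(q • b 1) := by rw [← lie_skew, h₀₂]
  have h₂₁ : ⁅b 2, b 1⁆ = q • b 0 := by rw [← lie_skew, h₁₂, neg_neg]
  have e₀₀ := hX' (b 0) (b 0)
  have e₀₁ := hX' (b 0) (b 1)
  have e₀₂ := hX' (b 0) (b 2)
  have e₁₀ := hX' (b 1) (b 0)
  have e₁₁ := hX' (b 1) (b 1)
  have e₁₂ := hX' (b 1) (b 2)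
  have e₂₀ := hX' (b 2) (b 0)
  have e₂₁ := hX' (b 2) (b 1)
  subst hXb
  simp [koszul, Matrix.det_fin_three, hb, h₀₁, h₀₂, h₁₂, h₁₀, h₂₀, h₂₁, hJ₀, hJ₁, hF₀, hF₁, hF₂,
    lie_add, lie_smul] at e₀₀ e₀₁ e₀₂ e₁₀ e₁₁ e₁₂ e₂₀ e₂₁
  exact ⟨by linear_combination e₀₀ / 2, by linear_combination -e₀₁ / 2,
    by linear_combination e₁₀ / 2, by linear_combination -e₁₁ / 2,
    by linear_combination e₀₂ / 2, by linear_combination e₁₂ / 2,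
    by linear_combination e₂₀ / 2, by linear_combination -e₂₁ / 2⟩

theorem eq_zero_of_koszul_relations {a c q h f ε α β γ : ℝ} (hε : ε ^ 2 = 1)
    (hunit : α ^ 2 + β ^ 2 + γ ^ 2 = 1)
    (e₀₀ : a * β = ε * f * γ) (e₀₁ : a * α = h * γ) (e₁₀ : c * β = h * γ)
    (e₁₁ : c * α = -(ε * f * γ)) (e₀₂ : ε * f * α = h * β) (e₁₂ : ε * f * β = -(h * α))
    (e₂₀ : q * β = 0) (e₂₁ : q * α = 0) :
    h = 0 ∧ f = 0 ∧ (a = 0 ∧ c = 0 ∧ q = 0 ∨ α = 0 ∧ β = 0 ∧ (γ = 1 ∨ γ = -1)) := by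
  have hε₀ : ε ≠ 0 := by rintro rfl; norm_num at hε
  have hh : h * (α ^ 2 + β ^ 2) = 0 := by linear_combination α * e₁₂ - β * e₀₂
  have hf : f * (α ^ 2 + β ^ 2) = 0 := by
    linear_combination ε * (α * e₀₂ + β * e₁₂) - f * (α ^ 2 + β ^ 2) * hε
  by_cases hαβ : α = 0 ∧ β = 0
  · obtain ⟨rfl, rfl⟩ := hαβ
    have hγ : γ ^ 2 = 1 := by linarith
    have hγ₀ : γ ≠ 0 := by rintro rfl; norm_num at hγ
    exact ⟨by simpa [hγ₀] using e₀₁.symm, by simpa [hε₀, hγ₀] using e₀₀.symm,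
      Or.inr ⟨rfl, rfl, sq_eq_one_iff.mp hγ⟩⟩
  · have hpos : α ^ 2 + β ^ 2 ≠ 0 := by
      rw [sq, sq]
      exact fun h0 => hαβ (mul_self_add_mul_self_eq_zero.mp h0)
    obtain rfl := (mul_eq_zero.mp hh).resolve_right hpos
    obtain rfl := (mul_eq_zero.mp hf).resolve_right hpos
    refine ⟨rfl, rfl, Or.inl ?_⟩
    rcases not_and_or.mp hαβ with hα | hβ
    · exact ⟨by simpa [hα] using e₀₁, by simpa [hα] using e₁₁, by simpa [hα] using e₂₁⟩
    · exact ⟨by simpa [hβ] using e₀₀, by simpa [hβ] using e₁₀, by simpa [hβ] using e₂₀⟩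

end Frame

theorem Module.Basis.lie_eq_zero_of_lie_eq_zero {R L ι : Type*} [CommRing R] [LieRing L]
    [LieAlgebra R L] (b : Basis ι R L) (h : ∀ i j, ⁅b i, b j⁆ = 0) (x y : L) : ⁅x, y⁆ = 0 := by
  have had : (LieAlgebra.ad R L : L →ₗ[R] Module.End R L) = 0 :=
    b.ext fun i => b.ext fun j => by simp [h]
  exact LinearMap.congr_fun (LinearMap.congr_fun had x) y

section Classification

variable {𝔤 : Type*} [LieRing 𝔤] [LieAlgebra ℝ 𝔤] {B : BilinForm ℝ 𝔤} {b : Basis (Fin 3) ℝ 𝔤}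

theorem exists_basis_of_lie_table_euclidean (hb : B.IsOrthonormal b) {q : ℝ} (hq : q ≠ 0)
    (h₀₁ : ⁅b 0, b 1⁆ = 0) (h₀₂ : ⁅b 0, b 2⁆ = q • b 1) (h₁₂ : ⁅b 1, b 2⁆ = -(q • b 0))
    {Y : 𝔤} (hY : Y = b 2 ∨ Y = -b 2) :
    ∃ (w : Basis (Fin 3) ℝ 𝔤) (l : ℝ), l ≠ 0 ∧
      (∀ i j, i ≠ j → B (w i) (w j) = 0) ∧ (∀ i, B (w i) (w i) = 1) ∧
      ⁅w 0, w 1⁆ = l • w 2 ∧ ⁅w 1, w 2⁆ = l • w 0 ∧ ⁅w 2, w 0⁆ = 0 ∧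
      b 2 = w 1 ∧ (Y = w 1 ∨ Y = -w 1) := by
  have : FiniteDimensional ℝ 𝔤 := .of_basis b
  have hv : B.IsOrthonormal ![b 1, b 2, -b 0] := by
    intro i j
    fin_cases i <;> fin_cases j <;> simp [hb]
  obtain ⟨w, hw⟩ := exists_basis_coe_eq_of_iIsOrtho (B := B) (v := ![b 1, b 2, -b 0])
    (fun i j hij => by simpa [hij] using hv i j) (fun i => by simp [hv])
    (by simp [finrank_eq_card_basis b])
  refine ⟨w, q, hq, fun i j hij => by simpa [hw, hij] using hv i j,
    fun i => by simpa [hw] using hv i i, ?_, ?_, ?_, by simp [hw], by simpa [hw] using hY⟩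
  · simp [hw, h₁₂]
  · rw [hw]; simp [← lie_skew (b 2) (b 0), h₀₂]
  · simp [hw, h₀₁]

theorem exists_basis_of_lie_table_affine (hb : B.IsOrthonormal b) {a c : ℝ}
    (hac : ¬(a = 0 ∧ c = 0)) (h₀₁ : ⁅b 0, b 1⁆ = a • b 0 + c • b 1)
    (h₀₂ : ⁅b 0, b 2⁆ = 0) (h₁₂ : ⁅b 1, b 2⁆ = 0) {Y : 𝔤} (hY : Y = b 2 ∨ Y = -b 2) :
    ∃ (w : Basis (Fin 3) ℝ 𝔤) (δ : ℝ), δ ≠ 0 ∧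
      (∀ i j, i ≠ j → B (w i) (w j) = 0) ∧
      B (w 0) (w 0) = 1 / δ ^ 2 ∧ B (w 1) (w 1) = 1 ∧ B (w 2) (w 2) = 1 ∧
      ⁅w 0, w 1⁆ = w 1 ∧ ⁅w 0, w 2⁆ = 0 ∧ ⁅w 1, w 2⁆ = 0 ∧
      b 2 = w 2 ∧ (Y = w 2 ∨ Y = -w 2) := by
  have : FiniteDimensional ℝ 𝔤 := .of_basis b
  have hpos : 0 < a ^ 2 + c ^ 2 := by
    refine lt_of_le_of_ne (by positivity) fun h0 => hac ?_
    rw [sq, sq] at h0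
    exact mul_self_add_mul_self_eq_zero.mp h0.symm
  set r := √(a ^ 2 + c ^ 2)
  have hr : r ≠ 0 := (Real.sqrt_pos.mpr hpos).ne'
  have hr2 : r ^ 2 = a ^ 2 + c ^ 2 := Real.sq_sqrt hpos.le
  set v := ![(c / (a ^ 2 + c ^ 2)) • b 0 - (a / (a ^ 2 + c ^ 2)) • b 1,
    (a / r) • b 0 + (c / r) • b 1, b 2]
  have hv : ∀ i j, B (v i) (v j) =
      if i = j then (if i = 0 then 1 / (a ^ 2 + c ^ 2) else 1) else 0 := by
    intro i j
    fin_cases i <;> fin_cases j <;> simp [v, hb] <;> field_simp <;> linarith [hr2]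
  obtain ⟨w, hw⟩ := exists_basis_coe_eq_of_iIsOrtho (B := B) (v := v)
    (fun i j hij => by simpa [hij] using hv i j)
    (fun i => by fin_cases i <;> simp [hv, hpos.ne'])
    (by simp [finrank_eq_card_basis b])
  refine ⟨w, r, hr, fun i j hij => by simpa [hw, hij] using hv i j,
    by simpa [hw, hr2] using hv 0 0, by simpa [hw] using hv 1 1, by simpa [hw] using hv 2 2,
    ?_, ?_, ?_, by simp [hw, v], by simpa [hw, v] using hY⟩
  · rw [hw]
    simp [v, lie_add, sub_lie, h₀₁, ← lie_skew (b 1) (b 0)]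
    match_scalars <;> field_simp
  · simp [hw, v, h₀₂, h₁₂]
  · simp [hw, v, h₀₂, h₁₂]

theorem classification_of_lie_table (hb : B.IsOrthonormal b) {a c q : ℝ}
    (h₀₁ : ⁅b 0, b 1⁆ = a • b 0 + c • b 1) (h₀₂ : ⁅b 0, b 2⁆ = q • b 1)
    (h₁₂ : ⁅b 1, b 2⁆ = -(q • b 0)) (hjac : a * q = 0 ∧ c * q = 0) {Y : 𝔤} {α β γ : ℝ}
    (hY : Y = α • b 0 + β • b 1 + γ • b 2)
    (hcases : a = 0 ∧ c = 0 ∧ q = 0 ∨ α = 0 ∧ β = 0 ∧ (γ = 1 ∨ γ = -1)) :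
    (∀ x y : 𝔤, ⁅x, y⁆ = 0) ∨
      (∃ (w : Basis (Fin 3) ℝ 𝔤) (l : ℝ), l ≠ 0 ∧
        (∀ i j, i ≠ j → B (w i) (w j) = 0) ∧ (∀ i, B (w i) (w i) = 1) ∧
        ⁅w 0, w 1⁆ = l • w 2 ∧ ⁅w 1, w 2⁆ = l • w 0 ∧ ⁅w 2, w 0⁆ = 0 ∧
        b 2 = w 1 ∧ (Y = w 1 ∨ Y = -w 1)) ∨
      (∃ (w : Basis (Fin 3) ℝ 𝔤) (δ : ℝ), δ ≠ 0 ∧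
        (∀ i j, i ≠ j → B (w i) (w j) = 0) ∧
        B (w 0) (w 0) = 1 / δ ^ 2 ∧ B (w 1) (w 1) = 1 ∧ B (w 2) (w 2) = 1 ∧
        ⁅w 0, w 1⁆ = w 1 ∧ ⁅w 0, w 2⁆ = 0 ∧ ⁅w 1, w 2⁆ = 0 ∧
        b 2 = w 2 ∧ (Y = w 2 ∨ Y = -w 2)) := by
  have habelian (ha : a = 0) (hc : c = 0) (hq : q = 0) : ∀ x y : 𝔤, ⁅x, y⁆ = 0 := by
    refine b.lie_eq_zero_of_lie_eq_zero fun i j => ?_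
    fin_cases i <;> fin_cases j <;>
      simp [h₀₁, h₀₂, h₁₂, ha, hc, hq, ← lie_skew (b 1) (b 0), ← lie_skew (b 2) (b 0),
        ← lie_skew (b 2) (b 1)]
  rcases hcases with ⟨ha, hc, hq⟩ | ⟨rfl, rfl, hγ⟩
  · exact Or.inl (habelian ha hc hq)
  have hY' : Y = b 2 ∨ Y = -b 2 := by rcases hγ with rfl | rfl <;> simp [hY]
  by_cases hq : q = 0
  · by_cases hac : a = 0 ∧ c = 0
    · exact Or.inl (habelian hac.1 hac.2 hq)
    · subst hq
      exact Or.inr (Or.inr (exists_basis_of_lie_table_affine hb hac h₀₁ (by simpa using h₀₂)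
        (by simpa using h₁₂) hY'))
  · have ha : a = 0 := (mul_eq_zero.mp hjac.1).resolve_right hq
    have hc : c = 0 := (mul_eq_zero.mp hjac.2).resolve_right hq
    exact Or.inr (Or.inl (exists_basis_of_lie_table_euclidean hb hq
      (by simpa [ha, hc] using h₀₁) h₀₂ h₁₂ hY'))

end Classification

theorem stmt_10_general {𝔤 : Type*} [LieRing 𝔤] [LieAlgebra ℝ 𝔤]
    (hdim : Module.finrank ℝ 𝔤 = 3)
    (B : LinearMap.BilinForm ℝ 𝔤)
    (hBsymm : ∀ x y, B x y = B y x)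
    (hBpos : ∀ x : 𝔤, x ≠ 0 → 0 < B x x)
    -- Levi-Civita product
    (N : 𝔤 → 𝔤 → 𝔤)
    (hK : ∀ x y z, 2 * B (N x y) z = B ⁅x, y⁆ z - B ⁅y, z⁆ x + B ⁅z, x⁆ y)
    -- B₃-Kähler datum
    (Jp Jm : 𝔤 →ₗ[ℝ] 𝔤) (Xp Xm : 𝔤)
    (hJpskew : ∀ x y, B (Jp x) y = - B x (Jp y))
    (hJmskew : ∀ x y, B (Jm x) y = - B x (Jm y))
    (hXp : B Xp Xp = 1) (hXm : B Xm Xm = 1)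
    (hJpXp : Jp Xp = 0) (hJmXm : Jm Xm = 0)
    (hJp2 : ∀ x, Jp (Jp x) = -x + B x Xp • Xp)
    (hJm2 : ∀ x, Jm (Jm x) = -x + B x Xm • Xm)
    (H : AlternatingMap ℝ 𝔤 ℝ (Fin 3)) (F : AlternatingMap ℝ 𝔤 ℝ (Fin 2))
    (hFXm : ∀ y : 𝔤, F ![Xm, y] = 0)
    (Hs : 𝔤 → 𝔤 → 𝔤) (hHs : ∀ x y z, B (Hs x y) z = H ![x, y, z])
    (Fs : 𝔤 → 𝔤) (hFs : ∀ x y, B (Fs x) y = F ![x, y])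
    (hNXm : ∀ x, N x Xm = (-(1 / 2 : ℝ)) • Hs x Xm)
    (hNXp : ∀ x, N x Xp = (-(1 / 2 : ℝ)) • Hs Xp x - Jp (Fs x)) :
    H = 0 ∧ F = 0 ∧
    ((∀ x y : 𝔤, ⁅x, y⁆ = 0) ∨
      (∃ (w : Module.Basis (Fin 3) ℝ 𝔤) (l : ℝ), l ≠ 0 ∧
        (∀ i j, i ≠ j → B (w i) (w j) = 0) ∧
        (∀ i, B (w i) (w i) = 1) ∧
        ⁅w 0, w 1⁆ = l • w 2 ∧ ⁅w 1, w 2⁆ = l • w 0 ∧ ⁅w 2, w 0⁆ = 0 ∧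
        Xm = w 1 ∧ (Xp = w 1 ∨ Xp = -w 1)) ∨
      (∃ (w : Module.Basis (Fin 3) ℝ 𝔤) (δ : ℝ), δ ≠ 0 ∧
        (∀ i j, i ≠ j → B (w i) (w j) = 0) ∧
        B (w 0) (w 0) = 1 / δ ^ 2 ∧ B (w 1) (w 1) = 1 ∧ B (w 2) (w 2) = 1 ∧
        ⁅w 0, w 1⁆ = w 1 ∧ ⁅w 0, w 2⁆ = 0 ∧ ⁅w 1, w 2⁆ = 0 ∧
        Xm = w 2 ∧ (Xp = w 2 ∨ Xp = -w 2))) := by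
  obtain ⟨b, hb, rfl⟩ :=
    exists_isOrthonormal_basis_of_skew_of_sq hdim hBsymm hBpos hJmskew hJmXm hJm2 hXm
  have hkXm : ∀ x z, koszul B x (b 2) z = -H ![x, b 2, z] := fun x z => by
    rw [koszul, ← hK, hNXm, map_smul, LinearMap.smul_apply, hHs, smul_eq_mul]
    ring
  have hkXp : ∀ x z, koszul B x Xp z = -H ![Xp, x, z] - 2 * B (Jp (Fs x)) z := fun x z => by
    rw [koszul, ← hK, hNXp, map_sub, map_smul, LinearMap.sub_apply, LinearMap.smul_apply, hHs,
      smul_eq_mul]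
    ring
  obtain ⟨a, c, q, h₀₁, h₀₂, h₁₂⟩ := exists_lie_table_of_koszul hb hkXm
  have hjac := mul_eq_zero_of_lie_table hb h₀₁ h₀₂ h₁₂
  have hXpb := b.eq_add_of_isOrthonormal_fin_three hb Xp
  obtain ⟨ε, hε, hJ₀, hJ₁, -⟩ := exists_sign_of_skew_of_sq hBsymm hb hJpskew hJpXp hJp2 hXp hXpb
  obtain ⟨hF₀, hF₁, hF₂⟩ := sharp_eq_of_iota_eq_zero hb hFs hFXm
  obtain ⟨e₀₀, e₀₁, e₁₀, e₁₁, e₀₂, e₁₂, e₂₀, e₂₁⟩ :=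
    koszul_relations hb h₀₁ h₀₂ h₁₂ rfl hJ₀ hJ₁ hF₀ hF₁ hF₂ hXpb hkXp
  obtain ⟨hh, hf, hcases⟩ := eq_zero_of_koszul_relations hε
    (hXp ▸ b.apply_self_of_isOrthonormal_fin_three hb Xp).symm e₀₀ e₀₁ e₁₀ e₁₁ e₀₂ e₁₂ e₂₀ e₂₁
  refine ⟨by rw [H.eq_smul_basis_det b, hh, zero_smul], ?_, ?_⟩
  · refine AlternatingMap.eq_zero_of_sharp_eq_zero b hFs fun i => ?_
    fin_cases i <;> simp [hF₀, hF₁, hF₂, hf]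
  · rw [hh, zero_smul, sub_zero] at h₀₁
    exact classification_of_lie_table hb h₀₁ h₀₂ h₁₂ hjac hXpb hcases

/-- Corollary 6.5: on a 3-dimensional Lie algebra `𝔤` with positive definite `B`, any
`B₃`-Kähler datum has `H = 0`, `F = 0` and one of: (1) `𝔤` abelian; (2) an orthonormal
basis with `[w₁,w₂] = λw₃`, `[w₂,w₃] = λw₁`, `[w₃,w₁] = 0` (`λ ≠ 0`), `X₋ = w₂`,
`X₊ = ±w₂`; (3) an orthogonal basis with `B(w₁,w₁) = 1/δ²`, `B(w₂,w₂) = B(w₃,w₃) = 1`,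
`[w₁,w₂] = w₂`, `[w₁,w₃] = [w₂,w₃] = 0`, `X₋ = w₃`, `X₊ = ±w₃`. -/
theorem stmt_10 {𝔤 : Type*} [LieRing 𝔤] [LieAlgebra ℝ 𝔤] [FiniteDimensional ℝ 𝔤]
    (hdim : Module.finrank ℝ 𝔤 = 3)
    (B : LinearMap.BilinForm ℝ 𝔤)
    (hBsymm : ∀ x y, B x y = B y x)
    (hBpos : ∀ x : 𝔤, x ≠ 0 → 0 < B x x)
    -- Levi-Civita product
    (N : 𝔤 → 𝔤 → 𝔤)
    (hK : ∀ x y z, 2 * B (N x y) z = B ⁅x, y⁆ z - B ⁅y, z⁆ x + B ⁅z, x⁆ y)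
    -- B₃-Kähler datum
    (Jp Jm : 𝔤 →ₗ[ℝ] 𝔤) (Xp Xm : 𝔤)
    (hJpskew : ∀ x y, B (Jp x) y = - B x (Jp y))
    (hJmskew : ∀ x y, B (Jm x) y = - B x (Jm y))
    (hXp : B Xp Xp = 1) (hXm : B Xm Xm = 1)
    (hJpXp : Jp Xp = 0) (hJmXm : Jm Xm = 0)
    (hJp2 : ∀ x, Jp (Jp x) = -x + B x Xp • Xp)
    (hJm2 : ∀ x, Jm (Jm x) = -x + B x Xm • Xm)
    (H : AlternatingMap ℝ 𝔤 ℝ (Fin 3)) (F : AlternatingMap ℝ 𝔤 ℝ (Fin 2))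
    (hdF : ∀ x y z : 𝔤, -F ![⁅x, y⁆, z] + F ![⁅x, z⁆, y] - F ![⁅y, z⁆, x] = 0)
    (hFXm : ∀ y : 𝔤, F ![Xm, y] = 0)
    (Hs : 𝔤 → 𝔤 → 𝔤) (hHs : ∀ x y z, B (Hs x y) z = H ![x, y, z])
    (Fs : 𝔤 → 𝔤) (hFs : ∀ x y, B (Fs x) y = F ![x, y])
    (hNXm : ∀ x, N x Xm = (-(1 / 2 : ℝ)) • Hs x Xm)
    (hNXp : ∀ x, N x Xp = (-(1 / 2 : ℝ)) • Hs Xp x - Jp (Fs x)) :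
    H = 0 ∧ F = 0 ∧
    ((∀ x y : 𝔤, ⁅x, y⁆ = 0) ∨
      (∃ (w : Module.Basis (Fin 3) ℝ 𝔤) (l : ℝ), l ≠ 0 ∧
        (∀ i j, i ≠ j → B (w i) (w j) = 0) ∧
        (∀ i, B (w i) (w i) = 1) ∧
        ⁅w 0, w 1⁆ = l • w 2 ∧ ⁅w 1, w 2⁆ = l • w 0 ∧ ⁅w 2, w 0⁆ = 0 ∧
        Xm = w 1 ∧ (Xp = w 1 ∨ Xp = -w 1)) ∨
      (∃ (w : Module.Basis (Fin 3) ℝ 𝔤) (δ : ℝ), δ ≠ 0 ∧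
        (∀ i j, i ≠ j → B (w i) (w j) = 0) ∧
        B (w 0) (w 0) = 1 / δ ^ 2 ∧ B (w 1) (w 1) = 1 ∧ B (w 2) (w 2) = 1 ∧
        ⁅w 0, w 1⁆ = w 1 ∧ ⁅w 0, w 2⁆ = 0 ∧ ⁅w 1, w 2⁆ = 0 ∧
        Xm = w 2 ∧ (Xp = w 2 ∨ Xp = -w 2))) :=
  stmt_10_general hdim B hBsymm hBpos N hK Jp Jm Xp Xm hJpskew hJmskew hXp hXm hJpXp hJmXm hJp2 hJm2
    H F hFXm Hs hHs Fs hFs hNXm hNXp
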